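/- Let U be a compact subset of ℝ^d, let f : U → ℝ^p be continuous, and let ξ_D be a Borel probability measure on U with invertible information matrix M(ξ_D) that maximizes det M(ξ) over all Borel probability measures ξ on U. Then every point u₀ in the topological support of ξ_D satisfies d(u₀, ξ_D) = p, where d(u, ξ) = f(u)ᵀ M(ξ)⁻¹ f(u). -/

import Mathlib

/-!
Perturb the D-optimal design `ξ` towards a point mass: for `ξ_α = (1 - α) ξ + α δ_u` the matrix
determinant lemma gives `det M(ξ_α) = (1 - α)^p det M(ξ) (1 + α / (1 - α) d(u, ξ))`, whose
derivative at `α = 0` is `det M(ξ) (d(u, ξ) - p)`. Optimality makes this nonpositive, and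
`det M(ξ) > 0` because `M(ξ)` is positive semidefinite, so `d(·, ξ) ≤ p` everywhere. On the
other hand `∫ d(u, ξ) ξ(du) = tr (M(ξ)⁻¹ M(ξ)) = p`, so the continuous nonnegative function
`p - d(·, ξ)` has zero integral and therefore vanishes on the support of `ξ`.
-/

open MeasureTheory Matrix

/-- Information matrix `M(ξ) = ∫ f(u) f(u)ᵀ ξ(du)` (defined entrywise). -/
noncomputable def infoMatrix {d p : ℕ} {U : Set (Fin d → ℝ)}
    (f : U → Fin p → ℝ) (ξ : Measure U) : Matrix (Fin p) (Fin p) ℝ :=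
  Matrix.of fun i j => ∫ u, f u i * f u j ∂ξ

/-- Variance function `d(u, ξ) = f(u)ᵀ M(ξ)⁻¹ f(u)`. -/
noncomputable def varFun {d p : ℕ} {U : Set (Fin d → ℝ)}
    (f : U → Fin p → ℝ) (ξ : Measure U) (u : U) : ℝ :=
  f u ⬝ᵥ (infoMatrix f ξ)⁻¹.mulVec (f u)

open Filter Topology Set
open scoped NNReal

namespace Matrix

variable {n : Type*} [Fintype n] [DecidableEq n]

theorem det_add_vecMulVec {R : Type*} [CommRing R] {A : Matrix n n R} (hA : IsUnit A.det)
    (u v : n → R) : (A + vecMulVec u v).det = A.det * (1 + v ⬝ᵥ A⁻¹ *ᵥ u) := by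
  rw [vecMulVec_eq Unit, det_add_replicateCol_mul_replicateRow hA, det_unique (n := Unit),
    Matrix.mul_assoc, ← replicateCol_mulVec, replicateRow_mul_replicateCol]
  rfl

theorem det_one_sub_smul_add_smul_vecMulVec {K : Type*} [Field K] {A : Matrix n n K}
    (hA : IsUnit A.det) (v : n → K) {α : K} (hα : α ≠ 1) :
    ((1 - α) • A + α • vecMulVec v v).det =
      (1 - α) ^ Fintype.card n * A.det * (1 + α / (1 - α) * (v ⬝ᵥ A⁻¹ *ᵥ v)) := by
  have hne : 1 - α ≠ 0 := sub_ne_zero.2 hα.symm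
  have hfactor : (1 - α) • A + α • vecMulVec v v =
      (1 - α) • (A + vecMulVec ((α / (1 - α)) • v) v) := by
    rw [smul_add, smul_vecMulVec, smul_smul, mul_div_cancel₀ _ hne]
  rw [hfactor, det_smul, det_add_vecMulVec hA, mulVec_smul, dotProduct_smul, smul_eq_mul,
    mul_assoc]

end Matrix

theorem HasDerivAt.nonpos_of_eventually_le {g : ℝ → ℝ} {g' a : ℝ} (hg : HasDerivAt g g' a)
    (hmax : ∀ᶠ x in 𝓝[>] a, g x ≤ g a) : g' ≤ 0 := by
  refine le_of_tendsto ((hasDerivAt_iff_tendsto_slope.mp hg).mono_left (nhdsGT_le_nhdsNE a)) ?_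
  filter_upwards [hmax, self_mem_nhdsWithin] with x hx hax
  rw [slope_def_field]
  exact div_nonpos_of_nonpos_of_nonneg (sub_nonpos.2 hx) (sub_nonneg.2 hax.le)

theorem le_of_forall_one_sub_pow_mul_le_one {n : ℕ} {c : ℝ}
    (h : ∀ α ∈ Ioo (0 : ℝ) 1, (1 - α) ^ n * (1 + α / (1 - α) * c) ≤ 1) : c ≤ n := by
  have hsub : HasDerivAt (fun α : ℝ => 1 - α) (-1) 0 := by
    simpa using (hasDerivAt_id (0 : ℝ)).const_sub 1
  have hderiv : HasDerivAt (fun α : ℝ => (1 - α) ^ n * (1 + α / (1 - α) * c)) (c - n) 0 := by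
    refine ((hsub.fun_pow n).fun_mul
      ((((hasDerivAt_id' 0).fun_div hsub (by norm_num)).mul_const c).const_add 1)).congr_deriv ?_
    norm_num
    ring
  have hmax : ∀ᶠ α in 𝓝[>] (0 : ℝ), (1 - α) ^ n * (1 + α / (1 - α) * c) ≤ 1 := by
    filter_upwards [Ioo_mem_nhdsGT (zero_lt_one' ℝ)] using h
  have := hderiv.nonpos_of_eventually_le (by simpa using hmax)
  linarith

section Measure

variable {X : Type*} [TopologicalSpace X] [MeasurableSpace X] {μ : Measure X}

theorem Continuous.integrable_of_compactSpace [OpensMeasurableSpace X] [CompactSpace X]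
    [IsFiniteMeasure μ] {E : Type*} [NormedAddCommGroup E] {g : X → E} (hg : Continuous g) :
    Integrable g μ :=
  hg.integrable_of_hasCompactSupport (.of_compactSpace g)

theorem Continuous.eq_zero_of_integral_eq_zero_of_mem_support {g : X → ℝ} (hg : Continuous g)
    (hg_nonneg : 0 ≤ g) (hg_int : Integrable g μ) (hg_zero : ∫ x, g x ∂μ = 0) {x : X}
    (hx : x ∈ μ.support) : g x = 0 := by
  by_contra hgx
  have hpos : 0 < μ (Function.support g) :=
    (Measure.mem_support_iff_forall x).1 hx _ (hg.isOpen_support.mem_nhds hgx)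
  exact ((integral_pos_iff_support_of_nonneg hg_nonneg hg_int).2 hpos).ne' hg_zero

end Measure

section InfoMatrix

variable {d p : ℕ} {U : Set (Fin d → ℝ)} {f : U → Fin p → ℝ}

theorem infoMatrix_transpose (ξ : Measure U) : (infoMatrix f ξ)ᵀ = infoMatrix f ξ := by
  ext i j
  simp only [infoMatrix, transpose_apply, of_apply, mul_comm]

theorem infoMatrix_smul (c : ℝ≥0) (ξ : Measure U) :
    infoMatrix f (c • ξ) = (c : ℝ) • infoMatrix f ξ := by
  ext i j
  simp [infoMatrix, integral_smul_nnreal_measure, NNReal.smul_def]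

theorem infoMatrix_dirac (u : U) : infoMatrix f (Measure.dirac u) = vecMulVec (f u) (f u) := by
  ext i j
  simp [infoMatrix, vecMulVec_apply]

theorem varFun_eq_sum (ξ : Measure U) (u : U) :
    varFun f ξ u = ∑ i, ∑ j, (infoMatrix f ξ)⁻¹ i j * (f u i * f u j) := by
  simp only [varFun, dotProduct, mulVec, Finset.mul_sum]
  exact Finset.sum_congr rfl fun i _ => Finset.sum_congr rfl fun j _ => by ring

theorem continuous_varFun (hf : Continuous f) (ξ : Measure U) : Continuous (varFun f ξ) := by
  rw [funext (varFun_eq_sum ξ)]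
  fun_prop

variable [CompactSpace U]

theorem infoMatrix_add (hf : Continuous f) (ξ ν : Measure U) [IsFiniteMeasure ξ]
    [IsFiniteMeasure ν] : infoMatrix f (ξ + ν) = infoMatrix f ξ + infoMatrix f ν := by
  ext i j
  have hcont : Continuous fun u => f u i * f u j := by fun_prop
  exact integral_add_measure hcont.integrable_of_compactSpace hcont.integrable_of_compactSpace

theorem integral_sum_mul_mul_apply (hf : Continuous f) (ξ : Measure U) [IsFiniteMeasure ξ]
    (A : Matrix (Fin p) (Fin p) ℝ) :
    ∫ u, ∑ i, ∑ j, A i j * (f u i * f u j) ∂ξ = ∑ i, ∑ j, A i j * infoMatrix f ξ i j := by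
  have hint i j : Integrable (fun u => A i j * (f u i * f u j)) ξ :=
    (by fun_prop : Continuous fun u => A i j * (f u i * f u j)).integrable_of_compactSpace
  rw [integral_finsetSum _ fun i _ => integrable_finsetSum _ fun j _ => hint i j]
  refine Finset.sum_congr rfl fun i _ => ?_
  rw [integral_finsetSum _ fun j _ => hint i j]
  exact Finset.sum_congr rfl fun j _ => integral_const_mul _ _

theorem posSemidef_infoMatrix (hf : Continuous f) (ξ : Measure U) [IsFiniteMeasure ξ] :
    (infoMatrix f ξ).PosSemidef := by
  refine posSemidef_iff_dotProduct_mulVec.2 ⟨infoMatrix_transpose ξ, fun x => ?_⟩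
  have hsq u : (f u ⬝ᵥ x) ^ 2 = ∑ i, ∑ j, vecMulVec x x i j * (f u i * f u j) := by
    simp only [sq, dotProduct, Finset.sum_mul_sum, vecMulVec_apply]
    exact Finset.sum_congr rfl fun i _ => Finset.sum_congr rfl fun j _ => by ring
  have hquad : star x ⬝ᵥ infoMatrix f ξ *ᵥ x = ∫ u, (f u ⬝ᵥ x) ^ 2 ∂ξ := by
    simp_rw [hsq]
    rw [integral_sum_mul_mul_apply hf]
    simp only [star_trivial, dotProduct, mulVec, Finset.mul_sum, vecMulVec_apply]
    exact Finset.sum_congr rfl fun i _ => Finset.sum_congr rfl fun j _ => by ring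
  exact hquad ▸ integral_nonneg fun u => sq_nonneg _

theorem integral_varFun (hf : Continuous f) (ξ : Measure U) [IsFiniteMeasure ξ]
    (hinv : IsUnit (infoMatrix f ξ).det) : ∫ u, varFun f ξ u ∂ξ = p := by
  calc ∫ u, varFun f ξ u ∂ξ = ∑ i, ∑ j, (infoMatrix f ξ)⁻¹ i j * infoMatrix f ξ i j := by
        simp only [varFun_eq_sum, integral_sum_mul_mul_apply hf]
    _ = ((infoMatrix f ξ)⁻¹ * (infoMatrix f ξ)ᵀ).trace := by simp [trace, mul_apply]
    _ = p := by rw [infoMatrix_transpose, nonsing_inv_mul _ hinv, trace_one, Fintype.card_fin]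

theorem varFun_le_of_forall_det_le (hf : Continuous f) (ξD : Measure U)
    [IsProbabilityMeasure ξD] (hinv : IsUnit (infoMatrix f ξD).det)
    (hopt : ∀ ξ : Measure U, IsProbabilityMeasure ξ →
      (infoMatrix f ξ).det ≤ (infoMatrix f ξD).det)
    (u : U) : varFun f ξD u ≤ p := by
  have hdet : 0 < (infoMatrix f ξD).det :=
    (posSemidef_infoMatrix hf ξD).det_nonneg.lt_of_ne' hinv.ne_zero
  refine le_of_forall_one_sub_pow_mul_le_one fun α ⟨hα0, hα1⟩ => ?_
  lift α to ℝ≥0 using hα0.le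
  have hα_le_one : α ≤ 1 := by exact_mod_cast hα1.le
  have hprob : IsProbabilityMeasure ((1 - α) • ξD + α • Measure.dirac u) :=
    ⟨by
      simp only [Measure.coe_add, Measure.coe_smul, Pi.add_apply, Pi.smul_apply, measure_univ,
        ENNReal.smul_one, ENNReal.coe_sub, ENNReal.coe_one]
      exact tsub_add_cancel_of_le (by exact_mod_cast hα_le_one)⟩
  have hmix : (infoMatrix f ((1 - α) • ξD + α • Measure.dirac u)).det =
      (1 - α) ^ p * (infoMatrix f ξD).det * (1 + α / (1 - α) * varFun f ξD u) := by
    rw [infoMatrix_add hf, infoMatrix_smul, infoMatrix_smul, infoMatrix_dirac,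
      NNReal.coe_sub hα_le_one, NNReal.coe_one, det_one_sub_smul_add_smul_vecMulVec hinv _ hα1.ne,
      Fintype.card_fin]
    rfl
  have hle := hopt _ hprob
  rw [hmix] at hle
  refine le_of_mul_le_mul_left ?_ hdet
  linarith

end InfoMatrix

/-- Kiefer–Wolfowitz Equivalence Theorem, last assertion: at every point of the
topological support of a D-optimal design `ξD` (i.e. every point all of whose
neighborhoods have positive `ξD`-measure), the variance function equals `p`. -/
theorem kieferWolfowitz_varFun_eq_dim_on_support
    {d p : ℕ} (U : Set (Fin d → ℝ)) (hU : IsCompact U)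
    (f : U → Fin p → ℝ) (hf : Continuous f)
    (ξD : Measure U) (hprob : IsProbabilityMeasure ξD)
    (hinv : IsUnit (infoMatrix f ξD).det)
    (hopt : ∀ ξ : Measure U, IsProbabilityMeasure ξ →
        (infoMatrix f ξ).det ≤ (infoMatrix f ξD).det) :
    ∀ u₀ : U, (∀ V ∈ nhds u₀, ξD V ≠ 0) → varFun f ξD u₀ = p := by
  intro u₀ hu₀
  have : CompactSpace U := isCompact_iff_compactSpace.mp hU
  have hvar_cont := continuous_varFun hf ξD
  have hgap_cont : Continuous fun u => (p : ℝ) - varFun f ξD u := continuous_const.sub hvar_cont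
  have hgap_nonneg : 0 ≤ fun u => (p : ℝ) - varFun f ξD u :=
    fun u => sub_nonneg.2 (varFun_le_of_forall_det_le hf ξD hinv hopt u)
  have hgap_zero : ∫ u, ((p : ℝ) - varFun f ξD u) ∂ξD = 0 := by
    rw [integral_sub (integrable_const _) hvar_cont.integrable_of_compactSpace,
      integral_varFun hf ξD hinv, integral_const, probReal_univ, one_smul, sub_self]
  have hsupp : u₀ ∈ ξD.support :=
    (Measure.mem_support_iff_forall u₀).2 fun V hV => pos_iff_ne_zero.2 (hu₀ V hV)
  have hgap := hgap_cont.eq_zero_of_integral_eq_zero_of_mem_support hgap_nonneg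
    hgap_cont.integrable_of_compactSpace hgap_zero hsupp
  linarith
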